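/- Assume the pair (c, κ) is admissible. Then for every λ ∈ (0, π²/(4c²κ)) and every a ∈ [0, 1−c], −B(a)/A(a) ≤ (√κ·π/c) · sinh( π(1−c)/(2c√κ) ) / ( (κ+1) − (κ−1)·cosh( π(1−c)/(2c√κ) ) ). -/

import Mathlib

/-- The threshold `c*` for `κ > 1`. -/
noncomputable def cStar (κ : ℝ) : ℝ :=
  1 / (1 + (2 * Real.sqrt κ / Real.pi) * Real.log ((Real.sqrt κ + 1) / (Real.sqrt κ - 1)))

/-- Admissibility of the pair `(c, κ)`. -/
def Admissible (c κ : ℝ) : Prop :=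
  (0 < κ ∧ κ ≤ 1 ∧ 0 < c ∧ c < 1) ∨ (1 < κ ∧ cStar κ < c ∧ c < 1)

/-- The coefficient `A(a)` of `β₀` in `∂_{β₁} f`. -/
noncomputable def A (c κ lam a : ℝ) : ℝ :=
  -2 * Real.sqrt κ * Real.cos (c * Real.sqrt (κ * lam)) * Real.sinh (Real.sqrt lam * (1 - c))
  + (κ - 1) * Real.sin (c * Real.sqrt (κ * lam)) * Real.cosh (Real.sqrt lam * (1 - c))
  - (κ + 1) * Real.sin (c * Real.sqrt (κ * lam)) * Real.cosh (Real.sqrt lam * (2 * a + c - 1))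

/-- The constant term `B(a)` in `∂_{β₁} f`. -/
noncomputable def B (c κ lam a : ℝ) : ℝ :=
  -2 * Real.sqrt (lam * κ) * Real.cos (c * Real.sqrt (κ * lam)) * Real.cosh (Real.sqrt lam * (1 - c))
  + (κ - 1) * Real.sqrt lam * Real.sin (c * Real.sqrt (κ * lam)) * Real.sinh (Real.sqrt lam * (1 - c))
  - (κ + 1) * Real.sqrt lam * Real.sin (c * Real.sqrt (κ * lam)) * Real.sinh (Real.sqrt lam * (2 * a + c - 1))

/-- Core scaling inequality. -/
lemma core_ineq (κ X r : ℝ) (hκ : 0 < κ) (hX : 0 ≤ X) (hr0 : 0 ≤ r) (hr1 : r ≤ 1)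
    (hD : 0 < (κ + 1) - (κ - 1) * Real.cosh X) :
    r * Real.sinh (r * X) * ((κ + 1) - (κ - 1) * Real.cosh X) ≤
      Real.sinh X * ((κ + 1) - (κ - 1) * Real.cosh (r * X)) := by
  have hrX : 0 ≤ r * X := mul_nonneg hr0 hX
  have hrXX : r * X ≤ X := by nlinarith
  have hs1 : Real.sinh (r * X) ≤ Real.sinh X := Real.sinh_le_sinh.mpr hrXX
  have hs0 : 0 ≤ Real.sinh (r * X) := Real.sinh_nonneg_iff.mpr hrX
  have hsX0 : 0 ≤ Real.sinh X := Real.sinh_nonneg_iff.mpr hX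
  have hA : r * Real.sinh (r * X) ≤ Real.sinh X := by nlinarith
  have hcX : Real.cosh (r * X) ≤ Real.cosh X := by
    rw [Real.cosh_le_cosh, abs_of_nonneg hrX, abs_of_nonneg hX]; exact hrXX
  have hmix : Real.sinh (r * X) * Real.cosh X ≤ Real.cosh (r * X) * Real.sinh X := by
    have h := Real.sinh_nonpos_iff.mpr (sub_nonpos.mpr hrXX)
    rw [Real.sinh_sub] at h; linarith
  rcases le_or_gt κ 1 with h | h
  · have hB : r * (Real.sinh (r * X) * Real.cosh X) ≤ Real.sinh X * Real.cosh (r * X) := by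
      have hc0 : (0:ℝ) < Real.cosh X := Real.cosh_pos X
      nlinarith [mul_nonneg hs0 hc0.le]
    have e1 : (κ + 1) * (r * Real.sinh (r * X)) ≤ (κ + 1) * Real.sinh X :=
      mul_le_mul_of_nonneg_left hA (by linarith)
    have e2 : (1 - κ) * (r * (Real.sinh (r * X) * Real.cosh X)) ≤
        (1 - κ) * (Real.sinh X * Real.cosh (r * X)) :=
      mul_le_mul_of_nonneg_left hB (by linarith)
    nlinarith [e1, e2]
  · have e1 : r * Real.sinh (r * X) * ((κ + 1) - (κ - 1) * Real.cosh X) ≤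
        Real.sinh X * ((κ + 1) - (κ - 1) * Real.cosh X) :=
      mul_le_mul_of_nonneg_right hA hD.le
    have e2 : Real.sinh X * ((κ + 1) - (κ - 1) * Real.cosh X) ≤
        Real.sinh X * ((κ + 1) - (κ - 1) * Real.cosh (r * X)) := by
      apply mul_le_mul_of_nonneg_left _ hsX0
      nlinarith
    linarith

theorem stmt11 (c κ : ℝ) (hadm : Admissible c κ) :
    ∀ lam ∈ Set.Ioo 0 (Real.pi ^ 2 / (4 * c ^ 2 * κ)), ∀ a ∈ Set.Icc (0:ℝ) (1 - c),
      -B c κ lam a / A c κ lam a ≤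
        (Real.sqrt κ * Real.pi / c) *
          Real.sinh (Real.pi * (1 - c) / (2 * c * Real.sqrt κ)) /
            ((κ + 1) - (κ - 1) * Real.cosh (Real.pi * (1 - c) / (2 * c * Real.sqrt κ))) := by
  have hπ : (0:ℝ) < Real.pi := Real.pi_pos
  have hπne : Real.pi ≠ 0 := ne_of_gt hπ
  have hκ : 0 < κ := by rcases hadm with ⟨h, _⟩ | ⟨h, _⟩ <;> linarith
  have hc0 : 0 < c := by
    rcases hadm with ⟨_, _, h, _⟩ | ⟨h1, h2, _⟩
    · exact h
    · have hsk : (1:ℝ) < Real.sqrt κ := by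
        have := Real.sqrt_lt_sqrt (by norm_num) h1
        simpa using this
      have hq : (1:ℝ) < (Real.sqrt κ + 1) / (Real.sqrt κ - 1) := by
        rw [lt_div_iff₀ (by linarith)]; linarith
      have hL : 0 < Real.log ((Real.sqrt κ + 1) / (Real.sqrt κ - 1)) := Real.log_pos hq
      have hd : (0:ℝ) < 1 + (2 * Real.sqrt κ / Real.pi) *
          Real.log ((Real.sqrt κ + 1) / (Real.sqrt κ - 1)) := by positivity
      have : 0 < cStar κ := by unfold cStar; positivity
      linarith
  have hcne : c ≠ 0 := ne_of_gt hc0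
  have hc1 : c < 1 := by rcases hadm with ⟨_, _, _, h⟩ | ⟨_, _, h⟩ <;> exact h
  have h1c : 0 < 1 - c := by linarith
  set sk := Real.sqrt κ with hsk_def
  have hsk0 : 0 < sk := Real.sqrt_pos.mpr hκ
  have hskne : sk ≠ 0 := ne_of_gt hsk0
  have hsk2 : sk ^ 2 = κ := Real.sq_sqrt hκ.le
  set X := Real.pi * (1 - c) / (2 * c * sk) with hX_def
  have hX0 : 0 < X := by rw [hX_def]; positivity
  -- positivity of D := (κ+1) - (κ-1) cosh X
  have hD : 0 < (κ + 1) - (κ - 1) * Real.cosh X := by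
    rcases hadm with ⟨_, hk1, _, _⟩ | ⟨hk1, hc2, _⟩
    · have h2 : (κ - 1) * Real.cosh X ≤ 0 :=
        mul_nonpos_of_nonpos_of_nonneg (by linarith) (Real.cosh_pos X).le
      linarith
    · -- κ > 1 : use c > cStar κ
      have hsk1 : (1:ℝ) < sk := by
        have := Real.sqrt_lt_sqrt (by norm_num) hk1
        simpa [hsk_def] using this
      set q := (sk + 1) / (sk - 1) with hq_def
      have hq1 : (1:ℝ) < q := by rw [hq_def, lt_div_iff₀ (by linarith)]; linarith
      set L := Real.log q with hL_def
      have hL0 : 0 < L := Real.log_pos hq1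
      have hd0 : (0:ℝ) < 1 + (2 * sk / Real.pi) * L := by positivity
      have hcstar : cStar κ = 1 / (1 + (2 * sk / Real.pi) * L) := rfl
      have hXL : X < L := by
        have h1 : 1 / (1 + (2 * sk / Real.pi) * L) < c := by rw [← hcstar]; exact hc2
        have h2 : 1 < c * (1 + (2 * sk / Real.pi) * L) := by
          rw [div_lt_iff₀ hd0] at h1; linarith
        rw [hX_def, div_lt_iff₀ (by positivity)]
        have : Real.pi * 1 < Real.pi * (c * (1 + (2 * sk / Real.pi) * L)) :=
          mul_lt_mul_of_pos_left h2 hπ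
        field_simp at this ⊢
        nlinarith
      have hcoshL : Real.cosh L = (κ + 1) / (κ - 1) := by
        have hq0 : 0 < q := by linarith
        rw [hL_def, Real.cosh_eq, Real.exp_log hq0, Real.exp_neg, Real.exp_log hq0]
        rw [hq_def]
        have h1 : sk - 1 ≠ 0 := ne_of_gt (by linarith)
        have h2 : sk + 1 ≠ 0 := ne_of_gt (by linarith)
        have h3 : κ - 1 ≠ 0 := ne_of_gt (by linarith)
        field_simp
        nlinarith [hsk2]
      have hcosh : Real.cosh X < Real.cosh L := by
        rw [Real.cosh_lt_cosh, abs_of_pos hX0, abs_of_pos hL0]; exact hXL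
      rw [hcoshL] at hcosh
      have hk1' : 0 < κ - 1 := by linarith
      rw [lt_div_iff₀ hk1'] at hcosh
      nlinarith
  clear_value X
  intro lam hlam a ha
  obtain ⟨hlam0, hlam1⟩ := hlam
  obtain ⟨ha0, ha1⟩ := ha
  set s := Real.sqrt lam with hs_def
  have hs0 : 0 < s := Real.sqrt_pos.mpr hlam0
  set θ := c * Real.sqrt (κ * lam) with hθ_def
  have hθeq : θ = c * (sk * s) := by
    rw [hθ_def, Real.sqrt_mul hκ.le, hsk_def, hs_def]
  set u := s * (1 - c) with hu_def
  set v := s * (2 * a + c - 1) with hv_def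
  have hAeq : A c κ lam a = -2 * sk * Real.cos θ * Real.sinh u
      + (κ - 1) * Real.sin θ * Real.cosh u - (κ + 1) * Real.sin θ * Real.cosh v := rfl
  have hBeq : B c κ lam a = -2 * (s * sk) * Real.cos θ * Real.cosh u
      + (κ - 1) * s * Real.sin θ * Real.sinh u - (κ + 1) * s * Real.sin θ * Real.sinh v := by
    unfold B
    rw [Real.sqrt_mul hlam0.le]
  clear_value sk s θ u v
  have hθ0 : 0 < θ := by rw [hθeq]; positivity
  have hθlt : θ < Real.pi / 2 := by
    have h1 : κ * lam < (Real.pi / (2 * c)) ^ 2 := by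
      have h2 : κ * lam < κ * (Real.pi ^ 2 / (4 * c ^ 2 * κ)) :=
        mul_lt_mul_of_pos_left hlam1 hκ
      have h3 : κ * (Real.pi ^ 2 / (4 * c ^ 2 * κ)) = (Real.pi / (2 * c)) ^ 2 := by
        field_simp; ring
      linarith [h3 ▸ h2]
    have h4 : Real.sqrt (κ * lam) < Real.pi / (2 * c) := by
      have := Real.sqrt_lt_sqrt (by positivity) h1
      rwa [Real.sqrt_sq (by positivity)] at this
    rw [hθ_def]
    calc c * Real.sqrt (κ * lam) < c * (Real.pi / (2 * c)) :=
          mul_lt_mul_of_pos_left h4 hc0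
      _ = Real.pi / 2 := by field_simp
  have hcos : 0 < Real.cos θ := Real.cos_pos_of_mem_Ioo ⟨by linarith, hθlt⟩
  have hsin : 0 < Real.sin θ := Real.sin_pos_of_pos_of_lt_pi hθ0 (by linarith)
  have hu0 : 0 < u := by rw [hu_def]; exact mul_pos hs0 h1c
  have hvu : v ≤ u := by
    rw [hu_def, hv_def]; apply mul_le_mul_of_nonneg_left _ hs0.le; linarith
  have huv : -u ≤ v := by
    rw [hu_def, hv_def]
    have : s * (-(1 - c)) ≤ s * (2 * a + c - 1) :=
      mul_le_mul_of_nonneg_left (by linarith) hs0.le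
    linarith [this]
  have hchv : Real.cosh v ≤ Real.cosh u := by
    rw [Real.cosh_le_cosh, abs_of_pos hu0, abs_le]; exact ⟨huv, hvu⟩
  have h1v : 1 ≤ Real.cosh v := Real.one_le_cosh v
  have hshv : -Real.sinh u ≤ Real.sinh v := by
    have := Real.sinh_le_sinh.mpr huv
    rwa [Real.sinh_neg] at this
  have hshu : 0 < Real.sinh u := Real.sinh_pos_iff.mpr hu0
  -- the scaling ratio
  set r := 2 * c * sk * s / Real.pi with hr_def
  have hr0 : 0 ≤ r := by rw [hr_def]; positivity
  have hr1 : r ≤ 1 := by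
    rw [hr_def, div_le_one hπ]
    have : c * (sk * s) < Real.pi / 2 := hθeq ▸ hθlt
    linarith
  have hrX : r * X = u := by
    rw [hr_def, hX_def, hu_def]
    field_simp
  clear_value r
  have hcore := core_ineq κ X r hκ hX0.le hr0 hr1 hD
  rw [hrX] at hcore
  -- set M and derive the key bound
  set D := (κ + 1) - (κ - 1) * Real.cosh X with hD_def
  set M := sk * Real.pi / c * Real.sinh X / D with hM_def
  have hDne : D ≠ 0 := ne_of_gt hD
  have hsX : 0 < Real.sinh X := Real.sinh_pos_iff.mpr hX0
  have hM0 : 0 < M := by rw [hM_def]; positivity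
  have hMD : M * D = sk * Real.pi / c * Real.sinh X := by
    rw [hM_def]; field_simp
  clear_value M D
  -- (*) : 2 κ s sinh u ≤ M ((κ+1) - (κ-1) cosh u)
  have hstar : 2 * κ * s * Real.sinh u ≤ M * ((κ + 1) - (κ - 1) * Real.cosh u) := by
    have h5 : (sk * Real.pi / c) * (r * Real.sinh u * D) ≤
        (sk * Real.pi / c) * (Real.sinh X * ((κ + 1) - (κ - 1) * Real.cosh u)) :=
      mul_le_mul_of_nonneg_left hcore (by positivity)
    have h6 : (sk * Real.pi / c) * r = 2 * κ * s := by
      rw [hr_def]; field_simp; linear_combination hsk2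
    have h7 : (sk * Real.pi / c) * (Real.sinh X * ((κ + 1) - (κ - 1) * Real.cosh u)) =
        M * ((κ + 1) - (κ - 1) * Real.cosh u) * D := by
      linear_combination (-((κ + 1) - (κ - 1) * Real.cosh u)) * hMD
    have h8 : 2 * κ * s * Real.sinh u * D ≤ M * ((κ + 1) - (κ - 1) * Real.cosh u) * D := by
      calc 2 * κ * s * Real.sinh u * D = (sk * Real.pi / c) * (r * Real.sinh u * D) := by
            rw [← h6]; ring
        _ ≤ _ := h5
        _ = _ := h7
    exact le_of_mul_le_mul_right h8 hD
  -- SC ≤ 0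
  have hSC : M * ((κ - 1) * Real.cosh u - (κ + 1) * Real.cosh v) +
      s * ((κ - 1) * Real.sinh u - (κ + 1) * Real.sinh v) ≤ 0 := by
    have e1 : M * (κ + 1) * 1 ≤ M * (κ + 1) * Real.cosh v :=
      mul_le_mul_of_nonneg_left h1v (by positivity)
    have e2 : s * (κ + 1) * (-Real.sinh u) ≤ s * (κ + 1) * Real.sinh v :=
      mul_le_mul_of_nonneg_left hshv (by positivity)
    linarith only [hstar, e1, e2]
  -- A < 0
  have hDu : 0 < (κ + 1) - (κ - 1) * Real.cosh u := by
    rcases le_or_gt κ 1 with h | h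
    · have h2 : (κ - 1) * Real.cosh u ≤ 0 :=
        mul_nonpos_of_nonpos_of_nonneg (by linarith) (Real.cosh_pos u).le
      linarith
    · have huX : u ≤ X := by
        calc u = r * X := hrX.symm
          _ ≤ 1 * X := mul_le_mul_of_nonneg_right hr1 hX0.le
          _ = X := one_mul X
      have h2 : Real.cosh u ≤ Real.cosh X := by
        rw [Real.cosh_le_cosh, abs_of_pos hu0, abs_of_pos hX0]; exact huX
      have h3 : (κ - 1) * Real.cosh u ≤ (κ - 1) * Real.cosh X :=
        mul_le_mul_of_nonneg_left h2 (by linarith)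
      rw [hD_def] at hD
      linarith
  have hbr : (κ - 1) * Real.cosh u - (κ + 1) * Real.cosh v < 0 := by
    have e : (κ + 1) * 1 ≤ (κ + 1) * Real.cosh v :=
      mul_le_mul_of_nonneg_left h1v (by linarith)
    linarith
  have hAneg : A c κ lam a < 0 := by
    rw [hAeq]
    have t1 : 0 < 2 * sk * Real.cos θ * Real.sinh u := by positivity
    have t2 : Real.sin θ * ((κ - 1) * Real.cosh u - (κ + 1) * Real.cosh v) < 0 :=
      mul_neg_of_pos_of_neg hsin hbr
    linarith only [t1, t2]
  -- final combination
  have hMAB : M * A c κ lam a + B c κ lam a ≤ 0 := by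
    rw [hAeq, hBeq]
    have c1 : 0 ≤ Real.cos θ * (2 * sk * (M * Real.sinh u + s * Real.cosh u)) := by
      have := Real.cosh_pos u
      positivity
    have c2 : Real.sin θ * (M * ((κ - 1) * Real.cosh u - (κ + 1) * Real.cosh v) +
        s * ((κ - 1) * Real.sinh u - (κ + 1) * Real.sinh v)) ≤ 0 :=
      mul_nonpos_of_nonneg_of_nonpos hsin.le hSC
    linarith only [c1, c2]
  rw [div_le_iff_of_neg hAneg]
  linarith only [hMAB]
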